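/- arXiv:2406.07374 — 3 statements merged into one kernel-verified Lean document; each statement's English description precedes it below -/
import Mathlib

section
/- (Proposition 1, full statement.) Let M and K be positive integers, let a_1,…,a_{K+1} ∈ ℂ^M, and let W_1,…,W_K and S be M×M complex positive semidefinite matrices such that a_k^H W_k a_k > 0 for every k ∈ {1,…,K}. Define, for each k, the rank-one reconstruction w̃_k = (a_k^H W_k a_k)^{-1/2} · (W_k a_k), W̃_k = w̃_k w̃_k^H, and S̃ = S + Σ_{k=1}^K W_k − Σ_{k=1}^K W̃_k. Then: (i) each W̃_k is positive semidefinite with rank(W̃_k) = 1; (ii) S̃ is positive semidefinite; (iii) Σ_{k=1}^K tr(W̃_k) + tr(S̃) = Σ_{k=1}^K tr(W_k) + tr(S); (iv) a_{K+1}^H (Σ_{k=1}^K W̃_k + S̃) a_{K+1} = a_{K+1}^H (Σ_{k=1}^K W_k + S) a_{K+1}; (v) for every k ∈ {1,…,K}, a_k^H W̃_k a_k = a_k^H W_k a_k and a_k^H (Σ_{l≠k} W̃_l + S̃) a_k = a_k^H (Σ_{l≠k} W_l + S) a_k. In particular the reconstruction preserves the total transmit power, the sensing beampattern gain toward a_{K+1},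 and both the signal and interference-plus-sensing quadratic forms of every user. -/
/-!
Write `t = aᴴ W a` and `u = W a`, so that `W̃ = t⁻¹ u uᴴ` (the factor `t^{-1/2}` is real). Then
`aᴴ W̃ a = t⁻¹ |uᴴ a|² = t`, and with `P = 1 - t⁻¹ a uᴴ` one has `Pᴴ W P = W - W̃`, so `W - W̃` is
positive semidefinite. Hence `S̃ = S + Σ_k (W_k - W̃_k)` is positive semidefinite, and the
remaining identities hold because `Σ_k W̃_k + S̃ = Σ_k W_k + S` and the summand `W_k - W̃_k` has
zero quadratic form at `a_k`.
-/

open Matrix Finset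
open scoped ComplexOrder

namespace Matrix

variable {m n R : Type*}

theorem vecMulVec_smul_star [CommSemiring R] [StarRing R] (c : R) (v : n → R) :
    vecMulVec (c • v) (star (c • v)) = (c * star c) • vecMulVec v (star v) := by
  ext i j
  simp only [vecMulVec_apply, Pi.smul_apply, Pi.star_apply, smul_eq_mul, star_mul', smul_apply]
  ring

variable [Fintype n]

section Rank

variable [Field R]

theorem rank_pos_of_ne_zero {A : Matrix m n R} (hA : A ≠ 0) : 0 < A.rank := by
  classical
  refine Nat.pos_of_ne_zero fun h => hA ?_
  rw [rank, Submodule.finrank_eq_zero, LinearMap.range_eq_bot, ← toLin'_apply'] at h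
  exact toLin'.injective (h.trans (map_zero _).symm)

theorem rank_vecMulVec_eq_one {w : m → R} {v : n → R} (hw : w ≠ 0) (hv : v ≠ 0) :
    (vecMulVec w v).rank = 1 := by
  obtain ⟨i, hi⟩ := Function.ne_iff.mp hw
  obtain ⟨j, hj⟩ := Function.ne_iff.mp hv
  have hwv : vecMulVec w v ≠ 0 := fun h => mul_ne_zero hi hj (congrFun₂ h i j)
  exact le_antisymm (rank_vecMulVec_le w v) (rank_pos_of_ne_zero hwv)

end Rank

variable [Field R] [PartialOrder R] [StarRing R] [StarOrderedRing R]

/-- `W̃ = (aᴴ W a)⁻¹ (W a)(W a)ᴴ`; when `aᴴ W a = 0` the junk value `0⁻¹ = 0` makes it `0`, so the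
lemmas below need no positivity hypothesis. -/
def rankOneReconstruction (W : Matrix n n R) (a : n → R) : Matrix n n R :=
  (star a ⬝ᵥ (W *ᵥ a))⁻¹ • vecMulVec (W *ᵥ a) (star (W *ᵥ a))

namespace PosSemidef

variable {W : Matrix n n R} (hW : W.PosSemidef) (a : n → R)
include hW

theorem star_dotProduct_mulVec_self_eq : star (star a ⬝ᵥ (W *ᵥ a)) = star a ⬝ᵥ (W *ᵥ a) :=
  (IsSelfAdjoint.of_nonneg (hW.dotProduct_mulVec_nonneg a)).star_eq

theorem dotProduct_rankOneReconstruction_mulVec :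
    star a ⬝ᵥ (rankOneReconstruction W a *ᵥ a) = star a ⬝ᵥ (W *ᵥ a) := by
  have hu : star (W *ᵥ a) ⬝ᵥ a = star a ⬝ᵥ (W *ᵥ a) := by
    rw [star_dotProduct, hW.star_dotProduct_mulVec_self_eq]
  rw [rankOneReconstruction, smul_mulVec, vecMulVec_mulVec, hu, op_smul_eq_smul, smul_smul,
    dotProduct_smul, smul_eq_mul, inv_mul_mul_self]

theorem sub_rankOneReconstruction : (W - rankOneReconstruction W a).PosSemidef := by
  classical
  have hu : star (W *ᵥ a) = star a ᵥ* W := by rw [star_mulVec, hW.isHermitian.eq]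
  have ht := hW.star_dotProduct_mulVec_self_eq a
  rw [rankOneReconstruction]
  set u := W *ᵥ a
  set t := star a ⬝ᵥ u
  set P : Matrix n n R := 1 - t⁻¹ • vecMulVec a (star u)
  have hP : Pᴴ = 1 - t⁻¹ • vecMulVec u (star a) := by
    rw [conjTranspose_sub, conjTranspose_one, conjTranspose_smul, conjTranspose_vecMulVec,
      star_star, star_inv₀, ht]
  have hWP : W * P = W - t⁻¹ • vecMulVec u (star u) := by
    rw [mul_sub, mul_one, mul_smul_comm, mul_vecMulVec]
  have hPWP : Pᴴ * W * P = W - t⁻¹ • vecMulVec u (star u) := by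
    rw [mul_assoc, hWP, hP, sub_mul, one_mul, mul_sub, smul_mul_assoc, smul_mul_assoc,
      mul_smul_comm, vecMulVec_mul, ← hu, vecMulVec_mul_vecMulVec, vecMulVec_smul, smul_smul,
      smul_smul, ← mul_inv, inv_mul_eq_div, div_self_mul_self']
    abel
  exact hPWP ▸ hW.conjTranspose_mul_mul_same P

end PosSemidef

end Matrix

theorem Complex.cpow_neg_half_mul_star {t : ℂ} (ht : 0 < t) :
    t ^ (-(1 / 2 : ℂ)) * star (t ^ (-(1 / 2 : ℂ))) = t⁻¹ := by
  obtain ⟨r, hr, rfl⟩ : ∃ r : ℝ, 0 < r ∧ (r : ℂ) = t :=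
    ⟨t.re, (Complex.pos_iff.mp ht).1, Complex.ext rfl (Complex.pos_iff.mp ht).2⟩
  have hexp : ((-(1 / 2 : ℝ) : ℝ) : ℂ) = -(1 / 2 : ℂ) := by push_cast; ring
  rw [← hexp, ← Complex.ofReal_cpow hr.le, Complex.star_def, Complex.conj_ofReal,
    ← Complex.ofReal_mul, ← Real.rpow_add hr, ← Complex.ofReal_inv]
  norm_num [Real.rpow_neg_one]

theorem proposition_1_general (M K : ℕ)
    (a : Fin K → Fin M → ℂ) (aT : Fin M → ℂ)
    (W : Fin K → Matrix (Fin M) (Fin M) ℂ) (S : Matrix (Fin M) (Fin M) ℂ)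
    (hW : ∀ k, (W k).PosSemidef) (hS : S.PosSemidef)
    (hpos : ∀ k, 0 < star (a k) ⬝ᵥ (W k *ᵥ a k))
    (wt : Fin K → Fin M → ℂ)
    (hwt : ∀ k, wt k = ((star (a k) ⬝ᵥ (W k *ᵥ a k)) ^ (-(1 / 2 : ℂ))) • (W k *ᵥ a k))
    (Wt : Fin K → Matrix (Fin M) (Fin M) ℂ)
    (hWt : ∀ k, Wt k = vecMulVec (wt k) (star (wt k)))
    (St : Matrix (Fin M) (Fin M) ℂ)
    (hSt : St = S + (∑ k, W k) - ∑ k, Wt k) :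
    (∀ k, (Wt k).PosSemidef ∧ (Wt k).rank = 1) ∧
    St.PosSemidef ∧
    ((∑ k, (Wt k).trace) + St.trace = (∑ k, (W k).trace) + S.trace) ∧
    (star aT ⬝ᵥ (((∑ k, Wt k) + St) *ᵥ aT) = star aT ⬝ᵥ (((∑ k, W k) + S) *ᵥ aT)) ∧
    (∀ k, star (a k) ⬝ᵥ (Wt k *ᵥ a k) = star (a k) ⬝ᵥ (W k *ᵥ a k) ∧
      star (a k) ⬝ᵥ (((∑ l ∈ univ.erase k, Wt l) + St) *ᵥ a k) =
        star (a k) ⬝ᵥ (((∑ l ∈ univ.erase k, W l) + S) *ᵥ a k)) := by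
  have hrec : ∀ k, Wt k = rankOneReconstruction (W k) (a k) := fun k => by
    rw [hWt, hwt, vecMulVec_smul_star, Complex.cpow_neg_half_mul_star (hpos k),
      rankOneReconstruction]
  have hsignal : ∀ k, star (a k) ⬝ᵥ (Wt k *ᵥ a k) = star (a k) ⬝ᵥ (W k *ᵥ a k) := fun k =>
    hrec k ▸ (hW k).dotProduct_rankOneReconstruction_mulVec (a k)
  have hwt_ne : ∀ k, wt k ≠ 0 := fun k hk => (hpos k).ne' <| by
    rw [← hsignal k, hWt k, hk]; simp
  have hSt_sum : St = S + ∑ k, (W k - Wt k) := by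
    rw [hSt, sum_sub_distrib]; abel
  refine ⟨fun k => ⟨?_, ?_⟩, ?_, ?_, ?_, fun k => ⟨hsignal k, ?_⟩⟩
  · exact hWt k ▸ posSemidef_vecMulVec_self_star (wt k)
  · exact hWt k ▸ rank_vecMulVec_eq_one (hwt_ne k) (star_ne_zero.mpr (hwt_ne k))
  · exact hSt_sum ▸ hS.add (posSemidef_sum _ fun k _ =>
      hrec k ▸ (hW k).sub_rankOneReconstruction (a k))
  · rw [hSt, trace_sub, trace_add, trace_sum, trace_sum]; ring
  · rw [hSt, add_sub_cancel, add_comm]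
  · have hsplit : (∑ l ∈ univ.erase k, Wt l) + St
        = ((∑ l ∈ univ.erase k, W l) + S) + (W k - Wt k) := by
      rw [sum_erase_eq_sub (mem_univ k), sum_erase_eq_sub (mem_univ k), hSt]; abel
    rw [hsplit, add_mulVec, dotProduct_add, sub_mulVec, dotProduct_sub, hsignal k, sub_self,
      add_zero]

/-- Proposition 1 (full statement). Given steering vectors `a 1, …, a K` of the users,
the target steering vector `aT`, PSD information covariances `W k` with
`a_k^H W_k a_k > 0`, and a PSD sensing covariance `S`, the rank-one reconstruction
`w̃_k = (a_k^H W_k a_k)^{-1/2} (W_k a_k)`, `W̃_k = w̃_k w̃_k^H`,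
`S̃ = S + Σ_k W_k − Σ_k W̃_k` satisfies:
(i) each `W̃_k` is PSD of rank 1; (ii) `S̃` is PSD; (iii) total transmit power is
preserved; (iv) the sensing beampattern gain toward `aT` is preserved; (v) for every
user both the signal and the interference-plus-sensing quadratic forms are preserved. -/
theorem proposition_1 (M K : ℕ) (hM : 0 < M) (hK : 0 < K)
    (a : Fin K → Fin M → ℂ) (aT : Fin M → ℂ)
    (W : Fin K → Matrix (Fin M) (Fin M) ℂ) (S : Matrix (Fin M) (Fin M) ℂ)
    (hW : ∀ k, (W k).PosSemidef) (hS : S.PosSemidef)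
    (hpos : ∀ k, 0 < star (a k) ⬝ᵥ (W k *ᵥ a k))
    (wt : Fin K → Fin M → ℂ)
    (hwt : ∀ k, wt k = ((star (a k) ⬝ᵥ (W k *ᵥ a k)) ^ (-(1 / 2 : ℂ))) • (W k *ᵥ a k))
    (Wt : Fin K → Matrix (Fin M) (Fin M) ℂ)
    (hWt : ∀ k, Wt k = vecMulVec (wt k) (star (wt k)))
    (St : Matrix (Fin M) (Fin M) ℂ)
    (hSt : St = S + (∑ k, W k) - ∑ k, Wt k) :
    (∀ k, (Wt k).PosSemidef ∧ (Wt k).rank = 1) ∧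
    St.PosSemidef ∧
    ((∑ k, (Wt k).trace) + St.trace = (∑ k, (W k).trace) + S.trace) ∧
    (star aT ⬝ᵥ (((∑ k, Wt k) + St) *ᵥ aT) = star aT ⬝ᵥ (((∑ k, W k) + S) *ᵥ aT)) ∧
    (∀ k, star (a k) ⬝ᵥ (Wt k *ᵥ a k) = star (a k) ⬝ᵥ (W k *ᵥ a k) ∧
      star (a k) ⬝ᵥ (((∑ l ∈ univ.erase k, Wt l) + St) *ᵥ a k) =
        star (a k) ⬝ᵥ (((∑ l ∈ univ.erase k, W l) + S) *ᵥ a k)) :=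
  proposition_1_general M K a aT W S hW hS hpos wt hwt Wt hWt St hSt
end

section
/- (SINR and rate invariance under the rank-one reconstruction; equality (26).) Let M, K be positive integers, a_1,…,a_K ∈ ℂ^M, h_k > 0 and σ_k² > 0 for k ∈ {1,…,K}, and let W_1,…,W_K, S be M×M complex positive semidefinite matrices with a_k^H W_k a_k > 0 for all k. Define the SINR of user k by γ_k(W,S) = h_k² · a_k^H W_k a_k / (h_k² · a_k^H (Σ_{l≠k} W_l + S) a_k + σ_k²) and the rate by r_k(W,S) = log₂(1 + γ_k(W,S)). Let w̃_k = (a_k^H W_k a_k)^{-1/2} · (W_k a_k), W̃_k = w̃_k w̃_k^H, and S̃ = S + Σ_{l=1}^K W_l − Σ_{l=1}^K W̃_l. Then for every k ∈ {1,…,K}, γ_k(W̃, S̃) = γ_k(W, S) and hence r_k(W̃, S̃) = r_k(W, S). -/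
open Matrix Finset
open scoped ComplexOrder

lemma vecMulVec_mulVec' {M : ℕ} (w v x : Fin M → ℂ) :
    vecMulVec w v *ᵥ x = (v ⬝ᵥ x) • w := by
  funext i
  simp only [mulVec, vecMulVec_apply, dotProduct, smul_eq_mul, Pi.smul_apply]
  rw [Finset.sum_mul]
  exact Finset.sum_congr rfl fun j _ => by ring

/-- SINR and rate invariance under the rank-one reconstruction (equality (26)).
With SINR `γ k W S = h_k² a_k^H W_k a_k / (h_k² a_k^H (Σ_{l≠k} W_l + S) a_k + σ_k²)`
and rate `r k W S = log₂(1 + γ k W S)`, the rank-one reconstruction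
`(W̃, S̃)` of a PSD tuple `(W, S)` leaves every user's SINR and rate unchanged. -/
theorem sinr_rate_invariance (M K : ℕ) (hM : 0 < M) (hK : 0 < K)
    (a : Fin K → Fin M → ℂ) (h σ2 : Fin K → ℝ)
    (hh : ∀ k, 0 < h k) (hσ : ∀ k, 0 < σ2 k)
    (W : Fin K → Matrix (Fin M) (Fin M) ℂ) (S : Matrix (Fin M) (Fin M) ℂ)
    (hW : ∀ k, (W k).PosSemidef) (hS : S.PosSemidef)
    (hpos : ∀ k, 0 < star (a k) ⬝ᵥ (W k *ᵥ a k))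
    (γ r : (Fin K → Matrix (Fin M) (Fin M) ℂ) → Matrix (Fin M) (Fin M) ℂ → Fin K → ℝ)
    (hγ : ∀ W' S' k, γ W' S' k =
      (h k) ^ 2 * (star (a k) ⬝ᵥ (W' k *ᵥ a k)).re /
        ((h k) ^ 2 * (star (a k) ⬝ᵥ (((∑ l ∈ univ.erase k, W' l) + S') *ᵥ a k)).re + σ2 k))
    (hr : ∀ W' S' k, r W' S' k = Real.logb 2 (1 + γ W' S' k))
    (wt : Fin K → Fin M → ℂ)
    (hwt : ∀ k, wt k = ((star (a k) ⬝ᵥ (W k *ᵥ a k)) ^ (-(1 / 2 : ℂ))) • (W k *ᵥ a k))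
    (Wt : Fin K → Matrix (Fin M) (Fin M) ℂ)
    (hWt : ∀ k, Wt k = vecMulVec (wt k) (star (wt k)))
    (St : Matrix (Fin M) (Fin M) ℂ)
    (hSt : St = S + (∑ l, W l) - ∑ l, Wt l) :
    ∀ k, γ Wt St k = γ W S k ∧ r Wt St k = r W S k := by
  -- key: the quadratic form of the rank-one reconstruction is unchanged
  have key : ∀ k, star (a k) ⬝ᵥ (Wt k *ᵥ a k) = star (a k) ⬝ᵥ (W k *ᵥ a k) := by
    intro k
    set c : ℂ := star (a k) ⬝ᵥ (W k *ᵥ a k) with hc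
    obtain ⟨hre, him⟩ := Complex.lt_def.mp (hpos k)
    simp only [Complex.zero_re, Complex.zero_im] at hre him
    have hcre : c = (c.re : ℂ) := by
      apply Complex.ext
      · simp
      · simp only [Complex.ofReal_im]
        rw [hc]; exact him.symm
    set t : ℝ := c.re with ht
    have hcpow : c ^ (-(1 / 2 : ℂ)) = ((t ^ (-(1 / 2 : ℝ)) : ℝ) : ℂ) := by
      rw [hcre, Complex.ofReal_cpow hre.le]
      norm_num
    have hstar : star (a k) ⬝ᵥ (wt k) = ((t ^ (-(1 / 2 : ℝ)) : ℝ) : ℂ) * c := by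
      rw [hwt k, dotProduct_smul, hcpow, ← hc, smul_eq_mul]
    rw [hWt k, vecMulVec_mulVec', dotProduct_smul, smul_eq_mul]
    have h2 : star (wt k) ⬝ᵥ a k = star (star (a k) ⬝ᵥ wt k) := star_dotProduct _ _
    rw [h2, hstar, hcre]
    rw [← Complex.ofReal_mul, Complex.star_def, Complex.conj_ofReal, ← Complex.ofReal_mul]
    norm_cast
    have heq : t ^ (-(1 / 2 : ℝ)) * t * (t ^ (-(1 / 2 : ℝ)) * t)
        = (t ^ (-(1 / 2 : ℝ)) * t ^ (-(1 / 2 : ℝ))) * (t * t) := by ring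
    rw [heq, ← Real.rpow_add hre]
    norm_num
    rw [Real.rpow_neg_one]
    field_simp
  -- the interference matrices give the same quadratic form
  have keyI : ∀ k, star (a k) ⬝ᵥ (((∑ l ∈ univ.erase k, Wt l) + St) *ᵥ a k)
      = star (a k) ⬝ᵥ (((∑ l ∈ univ.erase k, W l) + S) *ᵥ a k) := by
    intro k
    have hmat : (∑ l ∈ univ.erase k, Wt l) + St
        = ((∑ l ∈ univ.erase k, W l) + S) + (W k - Wt k) := by
      rw [hSt]
      have h1 : ∑ l ∈ univ.erase k, Wt l = (∑ l, Wt l) - Wt k :=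
        (Finset.sum_erase_eq_sub (mem_univ k))
      have h2 : ∑ l ∈ univ.erase k, W l = (∑ l, W l) - W k :=
        (Finset.sum_erase_eq_sub (mem_univ k))
      rw [h1, h2]; abel
    rw [hmat, add_mulVec, dotProduct_add, sub_mulVec, dotProduct_sub, key k]
    ring
  intro k
  have hγeq : γ Wt St k = γ W S k := by
    rw [hγ, hγ, key k, keyI k]
  exact ⟨hγeq, by rw [hr, hr, hγeq]⟩
end

section
/- (Tightness of the semidefinite relaxation: equality of optimal values.) Let M, K be positive integers, a_1,…,a_{K+1} ∈ ℂ^M, h_k > 0 and σ_k² > 0 for k ∈ {1,…,K}, P_max > 0 and Λ_th ≥ 0. Define the relaxed feasible set F* as the set of tuples (W_1,…,W_K, S) of M×M complex positive semidefinite matrices satisfying Σ_{k=1}^K tr(W_k) + tr(S) ≤ P_max and a_{K+1}^H (Σ_{k=1}^K W_k + S) a_{K+1} ≥ Λ_th, and the rank-constrained feasible set F = F* ∩ { (W,S) : rank(W_k) ≤ 1 for all k }. Define the sum-rate objective R(W,S) = Σ_{k=1}^K [ log₂( Σ_{l=1}^K h_k² a_k^H W_l a_k + h_k² a_k^H S a_k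 + σ_k² ) − log₂( Σ_{l≠k} h_k² a_k^H W_l a_k + h_k² a_k^H S a_k + σ_k² ) ]. Then sup_{(W,S) ∈ F} R(W,S) = sup_{(W,S) ∈ F*} R(W,S); that is, the semidefinite relaxation obtained by dropping the rank constraints does not change the optimal value, because any feasible point of F* can be converted into a point of F with the same objective value, same total power, and same beampattern gain. -/
open Matrix Finset
open scoped ComplexOrder

lemma vecMulVec_mulVec'_s10 {n : Type*} [Fintype n] (u w v : n → ℂ) :
    vecMulVec u w *ᵥ v = (w ⬝ᵥ v) • u := by
  funext i
  simp [vecMulVec, mulVec, dotProduct, Finset.mul_sum, mul_assoc, mul_comm, mul_left_comm]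

lemma star_qf {n : Type*} [Fintype n] {W : Matrix n n ℂ} (hW : W.IsHermitian)
    (a v : n → ℂ) : star v ⬝ᵥ (W *ᵥ a) = star (star a ⬝ᵥ (W *ᵥ v)) := by
  rw [star_dotProduct]
  congr 1
  rw [star_mulVec, hW.eq, ← dotProduct_mulVec]

lemma star_mulVec_dot {n : Type*} [Fintype n] {W : Matrix n n ℂ} (hW : W.IsHermitian)
    (a v : n → ℂ) : star (W *ᵥ a) ⬝ᵥ v = star a ⬝ᵥ (W *ᵥ v) := by
  rw [star_mulVec, hW.eq, ← dotProduct_mulVec]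

lemma cs_aux {n : Type*} [Fintype n] {W : Matrix n n ℂ} (hW : W.PosSemidef)
    (a v : n → ℂ) (hc : star a ⬝ᵥ (W *ᵥ a) ≠ 0) :
    0 ≤ star v ⬝ᵥ (W *ᵥ v) - (star a ⬝ᵥ (W *ᵥ a))⁻¹ *
      ((star a ⬝ᵥ (W *ᵥ v)) * (star v ⬝ᵥ (W *ᵥ a))) := by
  set c := star a ⬝ᵥ (W *ᵥ a) with hcdef
  set B := star a ⬝ᵥ (W *ᵥ v) with hBdef
  have hcr : star c = c := (IsSelfAdjoint.of_nonneg (hW.dotProduct_mulVec_nonneg a))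
  have hBs : star v ⬝ᵥ (W *ᵥ a) = star B := star_qf hW.1 a v
  have h0 := hW.dotProduct_mulVec_nonneg (v - (c⁻¹ * B) • a)
  have expand : star (v - (c⁻¹ * B) • a) ⬝ᵥ (W *ᵥ (v - (c⁻¹ * B) • a))
      = star v ⬝ᵥ (W *ᵥ v) - c⁻¹ * (B * star B) := by
    simp only [star_sub, star_smul, mulVec_sub, mulVec_smul, sub_dotProduct,
      dotProduct_sub, smul_dotProduct, dotProduct_smul, smul_eq_mul, star_mul',
      star_inv₀, hcr, hBs, ← hBdef, ← hcdef]
    field_simp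
    ring
  rw [expand] at h0
  calc (0:ℂ) ≤ star v ⬝ᵥ (W *ᵥ v) - c⁻¹ * (B * star B) := h0
    _ = _ := by rw [hBs]

lemma qf_sum {n ι : Type*} [Fintype n] (s : Finset ι) (T : ι → Matrix n n ℂ) (x y : n → ℂ) :
    y ⬝ᵥ ((∑ l ∈ s, T l) *ᵥ x) = ∑ l ∈ s, y ⬝ᵥ (T l *ᵥ x) := by
  classical
  induction s using Finset.induction with
  | empty => simp [Matrix.zero_mulVec]
  | insert _ _ hne ih =>
    rw [Finset.sum_insert hne, Finset.sum_insert hne, add_mulVec, dotProduct_add, ih]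

lemma psd_sum {n ι : Type*} [Fintype n] (s : Finset ι) (T : ι → Matrix n n ℂ)
    (hT : ∀ i ∈ s, (T i).PosSemidef) : (∑ i ∈ s, T i).PosSemidef := by
  classical
  induction s using Finset.induction with
  | empty => simpa using Matrix.PosSemidef.zero
  | insert _ _ hne ih =>
    rw [Finset.sum_insert hne]
    exact (hT _ (Finset.mem_insert_self _ _)).add
      (ih fun i hi => hT i (Finset.mem_insert_of_mem hi))

lemma vmv_herm {n : Type*} [Fintype n] (u : n → ℂ) :
    (vecMulVec u (star u)).IsHermitian := by
  ext i j
  simp [vecMulVec_apply, conjTranspose_apply, mul_comm]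

/-- Tightness of the semidefinite relaxation: dropping the rank-one constraints
`rank(W_k) ≤ 1` from the feasible set does not change the optimal value of the
sum-rate maximization problem, since any feasible point of the relaxed set `F*`
can be converted into a rank-constrained point with the same objective value,
total power and beampattern gain. -/
theorem sdr_tightness (M K : ℕ) (hM : 0 < M) (hK : 0 < K)
    (a : Fin K → Fin M → ℂ) (aT : Fin M → ℂ)
    (h σ2 : Fin K → ℝ) (hh : ∀ k, 0 < h k) (hσ : ∀ k, 0 < σ2 k)
    (Pmax : ℝ) (hP : 0 < Pmax) (Λ : ℝ) (hΛ : 0 ≤ Λ)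
    (Fstar F : Set ((Fin K → Matrix (Fin M) (Fin M) ℂ) × Matrix (Fin M) (Fin M) ℂ))
    (hFstar : Fstar = {p | (∀ k, (p.1 k).PosSemidef) ∧ p.2.PosSemidef ∧
      (∑ k, (p.1 k).trace) + p.2.trace ≤ (Pmax : ℂ) ∧
      (Λ : ℂ) ≤ star aT ⬝ᵥ (((∑ k, p.1 k) + p.2) *ᵥ aT)})
    (hF : F = {p ∈ Fstar | ∀ k, (p.1 k).rank ≤ 1})
    (R : (Fin K → Matrix (Fin M) (Fin M) ℂ) × Matrix (Fin M) (Fin M) ℂ → ℝ)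
    (hR : ∀ p, R p = ∑ k,
      (Real.logb 2 ((∑ l, (h k) ^ 2 * (star (a k) ⬝ᵥ (p.1 l *ᵥ a k)).re)
          + (h k) ^ 2 * (star (a k) ⬝ᵥ (p.2 *ᵥ a k)).re + σ2 k)
        - Real.logb 2 ((∑ l ∈ univ.erase k,
            (h k) ^ 2 * (star (a k) ⬝ᵥ (p.1 l *ᵥ a k)).re)
          + (h k) ^ 2 * (star (a k) ⬝ᵥ (p.2 *ᵥ a k)).re + σ2 k))) :
    sSup (R '' F) = sSup (R '' Fstar) := by
  classical
  suffices himg : R '' F = R '' Fstar by rw [himg]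
  apply Set.Subset.antisymm
  · exact Set.image_mono (by rw [hF]; exact fun p hp => hp.1)
  · rintro r ⟨⟨W, S⟩, hp, rfl⟩
    rw [hFstar] at hp
    obtain ⟨hPSD, hS, htr, hΛ2⟩ := hp
    set c : Fin K → ℂ := fun k => star (a k) ⬝ᵥ (W k *ᵥ a k) with hcdef
    set u : Fin K → Fin M → ℂ := fun k => W k *ᵥ a k with hudef
    set W' : Fin K → Matrix (Fin M) (Fin M) ℂ := fun k =>
      if c k = 0 then 0 else (c k)⁻¹ • vecMulVec (u k) (star (u k)) with hW'def
    set S' : Matrix (Fin M) (Fin M) ℂ := S + ∑ k, (W k - W' k) with hS'def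
    have hcr : ∀ k, star (c k) = c k := fun k => IsSelfAdjoint.of_nonneg ((hPSD k).dotProduct_mulVec_nonneg (a k))
    -- quadratic form of W' on its own steering vector is unchanged
    have hqf : ∀ k, star (a k) ⬝ᵥ (W' k *ᵥ a k) = c k := by
      intro k
      by_cases h0 : c k = 0
      · simp [hW'def, h0]
      · simp only [hW'def, if_neg h0, smul_mulVec, vecMulVec_mulVec'_s10,
          dotProduct_smul, smul_eq_mul]
        have h1 : star (u k) ⬝ᵥ a k = c k := by
          rw [hudef]
          simpa using star_mulVec_dot (hPSD k).1 (a k) (a k)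
        have h2 : star (a k) ⬝ᵥ u k = c k := rfl
        rw [h1, h2]
        field_simp
      -- W' is PSD
    have hW'psd : ∀ k, (W' k).PosSemidef := by
      intro k
      by_cases h0 : c k = 0
      · simp only [hW'def, if_pos h0]
        exact Matrix.PosSemidef.zero
      · have hcre : c k = ((c k).re : ℂ) := by
          have := ((hPSD k).dotProduct_mulVec_nonneg (a k))
          rw [Complex.nonneg_iff] at this
          exact (Complex.ext (by simp) (by exact this.2)).symm
        have hre0 : 0 ≤ (c k).re := (Complex.nonneg_iff.mp ((hPSD k).dotProduct_mulVec_nonneg (a k))).1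
        refine posSemidef_iff_dotProduct_mulVec.mpr ⟨?_, ?_⟩
        · simp only [hW'def, if_neg h0]
          unfold Matrix.IsHermitian
          rw [conjTranspose_smul, (vmv_herm (u k)).eq, star_inv₀, hcr]
        · intro x
          simp only [hW'def, if_neg h0, smul_mulVec, vecMulVec_mulVec'_s10,
            dotProduct_smul, smul_eq_mul]
          have hz : star (u k) ⬝ᵥ x = star (star x ⬝ᵥ u k) := by
            rw [star_dotProduct]
          rw [hz, hcre, ← Complex.ofReal_inv]
          set z := star x ⬝ᵥ u k
          have : (starRingEnd ℂ) z * z = (Complex.normSq z : ℂ) := by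
            rw [mul_comm, Complex.mul_conj]
          rw [show star z = (starRingEnd ℂ) z from rfl, this, ← Complex.ofReal_mul]
          rw [Complex.zero_le_real]
          exact mul_nonneg (inv_nonneg.2 hre0) (Complex.normSq_nonneg z)
    -- W - W' is PSD
    have hsubpsd : ∀ k, (W k - W' k).PosSemidef := by
      intro k
      by_cases h0 : c k = 0
      · simpa [hW'def, h0] using hPSD k
      · refine posSemidef_iff_dotProduct_mulVec.mpr ⟨?_, ?_⟩
        · exact (hPSD k).1.sub (hW'psd k).1
        · intro v
          rw [sub_mulVec, dotProduct_sub]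
          simp only [hW'def, if_neg h0, smul_mulVec, vecMulVec_mulVec'_s10,
            dotProduct_smul, smul_eq_mul]
          have h1 : star (u k) ⬝ᵥ v = star (a k) ⬝ᵥ (W k *ᵥ v) :=
            star_mulVec_dot (hPSD k).1 (a k) v
          have h2 : star v ⬝ᵥ u k = star v ⬝ᵥ (W k *ᵥ a k) := rfl
          rw [h1, h2]
          have := cs_aux (hPSD k) (a k) v h0
          calc (0:ℂ) ≤ _ := this
            _ = _ := by ring
    have hS'psd : S'.PosSemidef :=
      hS.add (psd_sum univ _ fun k _ => hsubpsd k)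
    have htot : (∑ k, W' k) + S' = (∑ k, W k) + S := by
      rw [hS'def, Finset.sum_sub_distrib]
      abel
    have hrank : ∀ k, (W' k).rank ≤ 1 := by
      intro k
      by_cases h0 : c k = 0
      · simp [hW'def, h0, Matrix.rank_zero]
      · have heq : W' k = vecMulVec ((c k)⁻¹ • u k) (star (u k)) := by
          simp only [hW'def, if_neg h0]
          ext i j
          simp [vecMulVec_apply, Matrix.smul_apply, smul_eq_mul, Pi.smul_apply, mul_assoc]
        rw [heq, vecMulVec_eq (Fin 1)]
        refine le_trans (Matrix.rank_mul_le_left _ _) ?_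
        exact le_of_le_of_eq (Matrix.rank_le_card_width (Matrix.replicateCol (Fin 1) ((c k)⁻¹ • u k))) (by simp)
    -- quadratic forms of totals agree
    have hsum : ∀ x : Fin M → ℂ,
        (∑ l, (star x ⬝ᵥ (W' l *ᵥ x)).re) + (star x ⬝ᵥ (S' *ᵥ x)).re
          = (∑ l, (star x ⬝ᵥ (W l *ᵥ x)).re) + (star x ⬝ᵥ (S *ᵥ x)).re := by
      intro x
      have key : ∀ (T : Fin K → Matrix (Fin M) (Fin M) ℂ) (Sm : Matrix (Fin M) (Fin M) ℂ),
          (∑ l, (star x ⬝ᵥ (T l *ᵥ x)).re) + (star x ⬝ᵥ (Sm *ᵥ x)).re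
            = (star x ⬝ᵥ (((∑ l, T l) + Sm) *ᵥ x)).re := by
        intro T Sm
        rw [add_mulVec, dotProduct_add, Complex.add_re, qf_sum, Complex.re_sum]
      rw [key, key, htot]
    refine ⟨(W', S'), ?_, ?_⟩
    · rw [hF]
      refine ⟨?_, hrank⟩
      rw [hFstar]
      refine ⟨hW'psd, hS'psd, ?_, ?_⟩
      · have : (∑ k, (W' k).trace) + S'.trace = (∑ k, (W k).trace) + S.trace := by
          rw [← trace_sum, ← trace_sum, ← trace_add, ← trace_add, htot]
        rw [this]
        exact htr
      · show (Λ : ℂ) ≤ star aT ⬝ᵥ (((∑ k, W' k) + S') *ᵥ aT)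
        rw [htot]
        exact hΛ2
    · rw [hR, hR]
      refine Finset.sum_congr rfl fun k _ => ?_
      have hown : (star (a k) ⬝ᵥ (W' k *ᵥ a k)).re = (star (a k) ⬝ᵥ (W k *ᵥ a k)).re := by
        rw [hqf k]
      have hnum : (∑ l, (h k) ^ 2 * (star (a k) ⬝ᵥ (W' l *ᵥ a k)).re)
            + (h k) ^ 2 * (star (a k) ⬝ᵥ (S' *ᵥ a k)).re + σ2 k
          = (∑ l, (h k) ^ 2 * (star (a k) ⬝ᵥ (W l *ᵥ a k)).re)
            + (h k) ^ 2 * (star (a k) ⬝ᵥ (S *ᵥ a k)).re + σ2 k := by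
        rw [← Finset.mul_sum, ← Finset.mul_sum, ← mul_add, ← mul_add, hsum (a k)]
      have hden : (∑ l ∈ univ.erase k, (h k) ^ 2 * (star (a k) ⬝ᵥ (W' l *ᵥ a k)).re)
            + (h k) ^ 2 * (star (a k) ⬝ᵥ (S' *ᵥ a k)).re + σ2 k
          = (∑ l ∈ univ.erase k, (h k) ^ 2 * (star (a k) ⬝ᵥ (W l *ᵥ a k)).re)
            + (h k) ^ 2 * (star (a k) ⬝ᵥ (S *ᵥ a k)).re + σ2 k := by
        rw [Finset.sum_erase_eq_sub (mem_univ k), Finset.sum_erase_eq_sub (mem_univ k)]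
        have hown' : (h k) ^ 2 * (star (a k) ⬝ᵥ (W' k *ᵥ a k)).re
            = (h k) ^ 2 * (star (a k) ⬝ᵥ (W k *ᵥ a k)).re := by rw [hown]
        linarith [hnum, hown']
      rw [hnum, hden]
end
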